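/- The explicit rate matrices solve the level-dependent nonlinear (Neuts/Latouche–Ramaswami) matrix equation: for every m with 1 ≤ m ≤ M−1, U^{m−1} + R_m W^m + R_m R_{m+1} D^{m+1} = 0. -/
import Mathlib


open Matrix

theorem stmt_11
    (M l : ℕ) (hM : 1 ≤ M)
    (Q : Matrix (Fin (M+1) × Fin (l+1)) (Fin (M+1) × Fin (l+1)) ℝ)
    (htri : ∀ (m n : Fin (M+1)) (i j : Fin (l+1)),
      1 < |(m.val : ℤ) - (n.val : ℤ)| → Q (m, i) (n, j) = 0)
    (hrow : ∀ s, ∑ t, Q s t = 0)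
    (W U D : ℕ → Matrix (Fin (l+1)) (Fin (l+1)) ℝ)
    (hW : ∀ (m : ℕ) (hm : m ≤ M) (i j : Fin (l+1)),
      W m i j = Q (⟨m, by omega⟩, i) (⟨m, by omega⟩, j))
    (hU : ∀ (m : ℕ) (hm : m < M) (i j : Fin (l+1)),
      U m i j = Q (⟨m, by omega⟩, i) (⟨m+1, by omega⟩, j))
    (hD : ∀ (m : ℕ) (hm1 : 1 ≤ m) (hm2 : m ≤ M) (i j : Fin (l+1)),
      D m i j = Q (⟨m, by omega⟩, i) (⟨m-1, by omega⟩, j))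
    (hDES : ∀ (m : ℕ), 1 ≤ m → m ≤ M → ∀ (i j : Fin (l+1)), j ≠ 0 → D m i j = 0)
    (Ut : ℕ → Matrix (Fin (l+1)) (Fin (l+1)) ℝ)
    (hUt : ∀ (m : ℕ), m < M → ∀ (i j : Fin (l+1)),
      Ut m i j = if j = 0 then ∑ k, U m i k else 0)
    (hUtM : Ut M = 0)
    (B : ℕ → Matrix (Fin (l+1)) (Fin (l+1)) ℝ)
    (hB : ∀ (m : ℕ), m ≤ M → B m = W m + Ut m)
    (hBinv : ∀ (m : ℕ), 1 ≤ m → m ≤ M → IsUnit (B m))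
    (R : ℕ → Matrix (Fin (l+1)) (Fin (l+1)) ℝ)
    (hR : ∀ (m : ℕ), 1 ≤ m → m ≤ M → R m = -(U (m-1) * (B m)⁻¹)) :
    ∀ (m : ℕ) (hm1 : 1 ≤ m) (hm2 : m < M),
      U (m-1) + R m * W m + R m * R (m+1) * D (m+1) = 0 := by
  intro m hm1 hm2
  set E : Matrix (Fin (l+1)) (Fin (l+1)) ℝ :=
    Matrix.of (fun _ j => if j = 0 then (1:ℝ) else 0) with hE
  -- row sum identity for blocks
  have hsum : ∀ (k : ℕ), 1 ≤ k → k ≤ M → ∀ i : Fin (l+1),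
      (∑ j, D k i j) + (∑ j, W k i j) + (∑ j, Ut k i j) = 0 := by
    intro k hk1 hk2 i
    have hk : k < M + 1 := by omega
    have hrs := hrow (⟨k, hk⟩, i)
    rw [Fintype.sum_prod_type] at hrs
    by_cases hkM : k < M
    · -- three blocks
      set a : Fin (M+1) := ⟨k-1, by omega⟩
      set b : Fin (M+1) := ⟨k, hk⟩
      set c : Fin (M+1) := ⟨k+1, by omega⟩
      have hs : (∑ n ∈ ({a, b, c} : Finset (Fin (M+1))), ∑ j, Q (⟨k, hk⟩, i) (n, j))
          = ∑ n, ∑ j, Q (⟨k, hk⟩, i) (n, j) := by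
        apply Finset.sum_subset (Finset.subset_univ _)
        intro n _ hn
        simp only [Finset.mem_insert, Finset.mem_singleton, not_or] at hn
        obtain ⟨h1, h2, h3⟩ := hn
        have h1' : n.val ≠ k - 1 := fun h => h1 (Fin.ext h)
        have h2' : n.val ≠ k := fun h => h2 (Fin.ext h)
        have h3' : n.val ≠ k + 1 := fun h => h3 (Fin.ext h)
        apply Finset.sum_eq_zero
        intro j _
        apply htri
        show (1:ℤ) < |(k : ℤ) - (n.val : ℤ)|
        rw [lt_abs]
        omega
      have hab : a ≠ b := Fin.ne_of_val_ne (by show k - 1 ≠ k; omega)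
      have hac : a ≠ c := Fin.ne_of_val_ne (by show k - 1 ≠ k + 1; omega)
      have hbc : b ≠ c := Fin.ne_of_val_ne (by show k ≠ k + 1; omega)
      rw [← hs] at hrs
      rw [Finset.sum_insert (by simp [hab, hac]), Finset.sum_insert (by simp [hbc]),
        Finset.sum_singleton] at hrs
      have hDk : (∑ j, D k i j) = ∑ j, Q (⟨k, hk⟩, i) (a, j) := by
        apply Finset.sum_congr rfl; intro j _; exact hD k hk1 hk2 i j
      have hWk : (∑ j, W k i j) = ∑ j, Q (⟨k, hk⟩, i) (b, j) := by
        apply Finset.sum_congr rfl; intro j _; exact hW k hk2 i j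
      have hUtk : (∑ j, Ut k i j) = ∑ j, Q (⟨k, hk⟩, i) (c, j) := by
        have : (∑ j, Ut k i j) = ∑ p, U k i p := by
          rw [Finset.sum_congr rfl (fun j _ => hUt k hkM i j)]
          simp
        rw [this]
        apply Finset.sum_congr rfl; intro p _; exact hU k hkM i p
      rw [hDk, hWk, hUtk]
      linarith [hrs]
    · -- k = M : two blocks
      have hkM' : k = M := by omega
      set a : Fin (M+1) := ⟨k-1, by omega⟩
      set b : Fin (M+1) := ⟨k, hk⟩
      have hs : (∑ n ∈ ({a, b} : Finset (Fin (M+1))), ∑ j, Q (⟨k, hk⟩, i) (n, j))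
          = ∑ n, ∑ j, Q (⟨k, hk⟩, i) (n, j) := by
        apply Finset.sum_subset (Finset.subset_univ _)
        intro n _ hn
        simp only [Finset.mem_insert, Finset.mem_singleton, not_or] at hn
        obtain ⟨h1, h2⟩ := hn
        have h1' : n.val ≠ k - 1 := fun h => h1 (Fin.ext h)
        have h2' : n.val ≠ k := fun h => h2 (Fin.ext h)
        have hn1 : n.val < M + 1 := n.isLt
        apply Finset.sum_eq_zero
        intro j _
        apply htri
        show (1:ℤ) < |(k : ℤ) - (n.val : ℤ)|
        rw [lt_abs]
        omega
      have hab : a ≠ b := Fin.ne_of_val_ne (by show k - 1 ≠ k; omega)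
      rw [← hs] at hrs
      rw [Finset.sum_insert (by simp [hab]), Finset.sum_singleton] at hrs
      have hDk : (∑ j, D k i j) = ∑ j, Q (⟨k, hk⟩, i) (a, j) := by
        apply Finset.sum_congr rfl; intro j _; exact hD k hk1 hk2 i j
      have hWk : (∑ j, W k i j) = ∑ j, Q (⟨k, hk⟩, i) (b, j) := by
        apply Finset.sum_congr rfl; intro j _; exact hW k hk2 i j
      have hUtk : (∑ j, Ut k i j) = 0 := by
        rw [hkM', hUtM]; simp
      rw [hDk, hWk, hUtk]
      linarith [hrs]
  -- B k * E = -(D k)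
  have hBE : ∀ (k : ℕ), 1 ≤ k → k ≤ M → B k * E = -(D k) := by
    intro k hk1 hk2
    ext i j
    rw [Matrix.mul_apply]
    have : ∀ p, B k i p * E p j = if j = 0 then B k i p else 0 := by
      intro p
      simp only [hE, Matrix.of_apply]
      by_cases h : j = 0 <;> simp [h]
    rw [Finset.sum_congr rfl (fun p _ => this p)]
    by_cases h : j = 0
    · subst h
      simp only [if_true, Matrix.neg_apply]
      have hDsum : (∑ p, D k i p) = D k i 0 := by
        have : ∀ p : Fin (l+1), D k i p = if p = 0 then D k i 0 else 0 := by
          intro p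
          by_cases hp : p = 0
          · simp [hp]
          · simp [hp, hDES k hk1 hk2 i p hp]
        rw [Finset.sum_congr rfl (fun p _ => this p)]
        simp
      have hBsum : (∑ p, B k i p) = (∑ p, W k i p) + (∑ p, Ut k i p) := by
        rw [hB k hk2]
        simp [Finset.sum_add_distrib]
      have := hsum k hk1 hk2 i
      rw [hDsum] at this
      rw [hBsum]
      linarith
    · simp [h, Matrix.neg_apply, hDES k hk1 hk2 i j h]
  -- U m * E = Ut m
  have hUE : U m * E = Ut m := by
    ext i j
    rw [Matrix.mul_apply, hUt m hm2 i j]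
    have : ∀ p, U m i p * E p j = if j = 0 then U m i p else 0 := by
      intro p
      simp only [hE, Matrix.of_apply]
      by_cases h : j = 0 <;> simp [h]
    rw [Finset.sum_congr rfl (fun p _ => this p)]
    by_cases h : j = 0 <;> simp [h]
  -- inverse cancellations
  have hBm1det : IsUnit (B (m+1)).det :=
    (Matrix.isUnit_iff_isUnit_det _).mp (hBinv (m+1) (by omega) (by omega))
  have hBmdet : IsUnit (B m).det :=
    (Matrix.isUnit_iff_isUnit_det _).mp (hBinv m hm1 (by omega))
  have hRD : R (m+1) * D (m+1) = Ut m := by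
    rw [hR (m+1) (by omega) (by omega)]
    have hDeq : D (m+1) = -(B (m+1) * E) := by
      rw [hBE (m+1) (by omega) (by omega), neg_neg]
    rw [hDeq]
    simp only [Nat.add_sub_cancel]
    rw [Matrix.mul_neg, neg_mul, neg_neg, Matrix.mul_assoc, ← Matrix.mul_assoc (B (m+1))⁻¹,
      Matrix.nonsing_inv_mul _ hBm1det, Matrix.one_mul, hUE]
  have hfin : U (m-1) * (B m)⁻¹ * B m = U (m-1) := by
    rw [Matrix.mul_assoc, Matrix.nonsing_inv_mul _ hBmdet, Matrix.mul_one]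
  have key : U (m-1) + -(U (m-1) * (B m)⁻¹) * W m + -(U (m-1) * (B m)⁻¹) * Ut m
      = U (m-1) - U (m-1) * (B m)⁻¹ * (W m + Ut m) := by noncomm_ring
  rw [Matrix.mul_assoc, hRD, hR m hm1 (by omega), key, ← hB m (by omega), hfin, sub_self]
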